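/- Let T be the indicator vector of three distinct edges of a simple graph G such that the three edges do not form a K₃ and no vertex lies in all three edges. Then, with L the Laplacian of the line graph and d its degree vector, Tᵀ L T − dᵀ T > −6 (in fact ≥ −4). -/

import Mathlib

/-- The degree of edge `e` in the line graph of `G`: the number of other edges of `G`
sharing a vertex with `e`. -/
def lineDeg {V : Type*} [Fintype V] [DecidableEq V] (G : SimpleGraph V)
    [DecidableRel G.Adj] (e : Sym2 V) : ℕ :=
  (G.edgeFinset.filter (fun f => f ≠ e ∧ ∃ v, v ∈ e ∧ v ∈ f)).card

/-- The Laplacian of the line graph of `G`, as a function on pairs of edges: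
`L e e` is the line-graph degree of `e`; `L e f = -1` if distinct edges `e, f` share a
vertex, and `0` otherwise. -/
def lineLap {V : Type*} [Fintype V] [DecidableEq V] (G : SimpleGraph V)
    [DecidableRel G.Adj] (e f : Sym2 V) : ℤ :=
  if e = f then (lineDeg G e : ℤ) else if ∃ v, v ∈ e ∧ v ∈ f then -1 else 0

/-- Three edges form a subgraph isomorphic to `K₃`. -/
def FormsK3 {V : Type*} [DecidableEq V] (e₁ e₂ e₃ : Sym2 V) : Prop :=
  ∃ a b c : V, a ≠ b ∧ a ≠ c ∧ b ≠ c ∧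
    ({e₁, e₂, e₃} : Finset (Sym2 V)) = {s(a, b), s(a, c), s(b, c)}

/-! For the indicator `T` of an edge set `S`, the diagonal entries `L e e = d e` of the quadratic
form cancel against `dᵀ T`, leaving `∑_{e ≠ f ∈ S} L e f`. For three edges this is twice the sum
of the three pair entries, each `0` or `-1`. Three edges meeting pairwise but with no common
vertex meet in three distinct points `x, y, z` and so are `xy, xz, yz`, a `K₃`; hence at most two
pair entries are `-1` and the form is at least `-4`. -/

open Finset

lemma sum_mul_indicator_of_subset {α R : Type*} [DecidableEq α] [NonAssocSemiring R]
    {s t : Finset α} (hts : t ⊆ s) (g : α → R) :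
    ∑ e ∈ s, g e * (if e ∈ t then 1 else 0) = ∑ e ∈ t, g e := by
  simp_rw [mul_ite, mul_one, mul_zero]
  rw [sum_ite_mem, inter_eq_right.mpr hts]

lemma sum_sum_erase_triple {α R : Type*} [DecidableEq α] [CommSemiring R] (M : α → α → R)
    (hM : ∀ x y, M x y = M y x) {a b c : α} (hab : a ≠ b) (hac : a ≠ c) (hbc : b ≠ c) :
    ∑ e ∈ ({a, b, c} : Finset α), ∑ f ∈ ({a, b, c} : Finset α).erase e, M e f =
      2 * (M a b + M a c + M b c) := by
  simp only [mem_insert, mem_singleton, hab, hac, hbc, or_self, not_false_eq_true, ne_eq,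
    sum_insert, sum_singleton, erase_insert_eq_erase, erase_insert_of_ne, erase_eq_of_notMem,
    erase_singleton, insert_empty_eq, hM b a, hM c a, hM c b]
  ring

lemma formsK3_of_pairwise_meet {V : Type*} [DecidableEq V] {e₁ e₂ e₃ : Sym2 V}
    (h₁₂ : ∃ v, v ∈ e₁ ∧ v ∈ e₂) (h₁₃ : ∃ v, v ∈ e₁ ∧ v ∈ e₃) (h₂₃ : ∃ v, v ∈ e₂ ∧ v ∈ e₃)
    (hcom : ¬ ∃ v, v ∈ e₁ ∧ v ∈ e₂ ∧ v ∈ e₃) : FormsK3 e₁ e₂ e₃ := by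
  obtain ⟨x, hx₁, hx₂⟩ := h₁₂
  obtain ⟨y, hy₁, hy₃⟩ := h₁₃
  obtain ⟨z, hz₂, hz₃⟩ := h₂₃
  have hxy : x ≠ y := by rintro rfl; exact hcom ⟨x, hx₁, hx₂, hy₃⟩
  have hxz : x ≠ z := by rintro rfl; exact hcom ⟨x, hx₁, hx₂, hz₃⟩
  have hyz : y ≠ z := by rintro rfl; exact hcom ⟨y, hy₁, hz₂, hy₃⟩
  refine ⟨x, y, z, hxy, hxz, hyz, ?_⟩
  rw [(Sym2.mem_and_mem_iff hxy).mp ⟨hx₁, hy₁⟩, (Sym2.mem_and_mem_iff hxz).mp ⟨hx₂, hz₂⟩,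
    (Sym2.mem_and_mem_iff hyz).mp ⟨hy₃, hz₃⟩]

section LineLaplacian

variable {V : Type*} [Fintype V] [DecidableEq V] (G : SimpleGraph V) [DecidableRel G.Adj]

lemma lineLap_self (e : Sym2 V) : lineLap G e e = lineDeg G e := if_pos rfl

lemma lineLap_of_ne {e f : Sym2 V} (h : e ≠ f) :
    lineLap G e f = if ∃ v, v ∈ e ∧ v ∈ f then -1 else 0 := if_neg h

lemma lineLap_comm (e f : Sym2 V) : lineLap G e f = lineLap G f e := by
  by_cases h : e = f
  · rw [h]
  · simp only [lineLap_of_ne G h, lineLap_of_ne G (Ne.symm h), and_comm]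

lemma quadForm_indicator_sub_deg {S : Finset (Sym2 V)} (hS : S ⊆ G.edgeFinset) :
    (∑ e ∈ G.edgeFinset, ∑ f ∈ G.edgeFinset,
        (if e ∈ S then 1 else 0) * lineLap G e f * (if f ∈ S then 1 else 0)) -
      ∑ e ∈ G.edgeFinset, (lineDeg G e : ℤ) * (if e ∈ S then 1 else 0) =
      ∑ e ∈ S, ∑ f ∈ S.erase e, lineLap G e f := by
  have hrow : ∀ e, ∑ f ∈ G.edgeFinset,
      (if e ∈ S then 1 else 0) * lineLap G e f * (if f ∈ S then 1 else 0) =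
      (∑ f ∈ S, lineLap G e f) * (if e ∈ S then 1 else 0) := fun e => by
    rw [sum_mul_indicator_of_subset hS, ← mul_sum, mul_comm]
  simp only [hrow, sum_mul_indicator_of_subset hS, ← sum_sub_distrib]
  refine sum_congr rfl fun e he => ?_
  rw [← add_sum_erase S _ he, lineLap_self, add_sub_cancel_left]

end LineLaplacian

/-- For the indicator vector `T` of three distinct edges of `G` that do not form a `K₃`
and have no common vertex, `Tᵀ L T − dᵀ T > −6` (in fact `≥ −4`). -/
theorem quadForm_indicator_gt_neg_six {V : Type*} [Fintype V] [DecidableEq V]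
    (G : SimpleGraph V) [DecidableRel G.Adj] (j₁ j₂ j₃ : Sym2 V)
    (hj₁ : j₁ ∈ G.edgeFinset) (hj₂ : j₂ ∈ G.edgeFinset) (hj₃ : j₃ ∈ G.edgeFinset)
    (h₁₂ : j₁ ≠ j₂) (h₁₃ : j₁ ≠ j₃) (h₂₃ : j₂ ≠ j₃)
    (hK : ¬ FormsK3 j₁ j₂ j₃)
    (hcom : ¬ ∃ v : V, v ∈ j₁ ∧ v ∈ j₂ ∧ v ∈ j₃)
    (T : Sym2 V → ℤ)
    (hT : ∀ e, T e = if e = j₁ ∨ e = j₂ ∨ e = j₃ then 1 else 0) :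
    -6 < (∑ e ∈ G.edgeFinset, ∑ f ∈ G.edgeFinset, T e * lineLap G e f * T f) -
          ∑ e ∈ G.edgeFinset, (lineDeg G e : ℤ) * T e ∧
      -4 ≤ (∑ e ∈ G.edgeFinset, ∑ f ∈ G.edgeFinset, T e * lineLap G e f * T f) -
          ∑ e ∈ G.edgeFinset, (lineDeg G e : ℤ) * T e := by
  have hT_indicator : T = fun e => if e ∈ ({j₁, j₂, j₃} : Finset (Sym2 V)) then 1 else 0 := by
    funext e
    simp only [hT, mem_insert, mem_singleton]
  have hS : ({j₁, j₂, j₃} : Finset (Sym2 V)) ⊆ G.edgeFinset := by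
    simp only [insert_subset_iff, singleton_subset_iff]
    exact ⟨hj₁, hj₂, hj₃⟩
  have hpairs : -2 ≤ lineLap G j₁ j₂ + lineLap G j₁ j₃ + lineLap G j₂ j₃ := by
    rw [lineLap_of_ne G h₁₂, lineLap_of_ne G h₁₃, lineLap_of_ne G h₂₃]
    split_ifs with m₁₂ m₁₃ m₂₃
    · exact absurd (formsK3_of_pairwise_meet m₁₂ m₁₃ m₂₃ hcom) hK
    all_goals norm_num
  rw [hT_indicator, quadForm_indicator_sub_deg G hS,
    sum_sum_erase_triple _ (lineLap_comm G) h₁₂ h₁₃ h₂₃]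
  omega
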